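/- Let ℓ₁, ℓ₂ be positive integers, 𝓛 the linear functional with 𝓛(((1-x)/2)^m) = (-ℓ₁)_m/(-ℓ₁-ℓ₂)_m for 0 ≤ m ≤ ℓ₁+ℓ₂, and Gₙ(x) = Σ_{k=0}^{n} (-n)_k (n-ℓ₁-ℓ₂-1)_k / ((-ℓ₁)_k k!) ((1-x)/2)^k for n ≤ min(ℓ₁,ℓ₂). Then for 0 ≤ m < n ≤ min(ℓ₁,ℓ₂), 𝓛(Gₙ(x)·((1-x)/2)^m) = 0, and 𝓛(Gₙ(x)·((1-x)/2)^n) = (-1)ⁿ n! (-ℓ₂)ₙ / (-ℓ₁-ℓ₂)_{2n}. -/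

import Mathlib

/-!
Expanding `Gₙ` against the moments turns `𝓛(Gₙ · uᵐ)`, `u = (1 - x)/2`, into a balanced
terminating ₃F₂ sum. Rather than quoting Pfaff–Saalschütz, put `x₀ = ℓ₁ + ℓ₂ + 1 - n`:
splitting `(-ℓ₁-ℓ₂)ₙ₊ₖ` in two ways shows that the `k`-th term is a constant times
`(-1)ᵏ C(n,k) P(k)/(x₀ - k)` with `P(y) = (y - ℓ₁)ₘ (y + m - ℓ₁ - ℓ₂)ₙ₋ₘ` of degree `n`.
The polynomial of degree `n` interpolating `P(k)/(x₀ - k)` at `k = 0, …, n` has leading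
coefficient `P(x₀)/∏ᵢ₌₀ⁿ (x₀ - i)`, and the `n`-th finite difference reads off that
coefficient. Finally `P(x₀) = (ℓ₂ + 1 - n)ₘ (1 + m - n)ₙ₋ₘ`, which vanishes unless `m = n`.
-/

open Polynomial

/-- Pochhammer symbol `(a)_n = a(a+1)⋯(a+n-1)`. -/
def poch {R : Type*} [CommRing R] (a : R) (n : ℕ) : R :=
  ∏ i ∈ Finset.range n, (a + i)

/-- The polynomial `Gₙ` (normalized Jacobi with negative integer parameters). -/
noncomputable def jacGpoly (l1 l2 : ℕ) (n : ℕ) : Polynomial ℚ :=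
  ∑ k ∈ Finset.range (n + 1),
    C (poch (-(n : ℚ)) k * poch ((n : ℚ) - l1 - l2 - 1) k /
        (poch (-(l1 : ℚ)) k * (k.factorial : ℚ))) *
      ((1 - X) * C (1 / 2)) ^ k

open Finset

section Poch

variable {R : Type*} [CommRing R]

theorem poch_eq_eval_ascPochhammer (a : R) (n : ℕ) : poch a n = (ascPochhammer R n).eval a := by
  induction n with
  | zero => simp [poch]
  | succ n ih => rw [poch, prod_range_succ, ← poch, ih, ascPochhammer_succ_eval]

theorem poch_zero (a : R) : poch a 0 = 1 := prod_range_zero _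

theorem poch_add (a : R) (s t : ℕ) : poch a (s + t) = poch a s * poch (a + s) t := by
  simp only [poch, prod_range_add, Nat.cast_add, add_assoc]

theorem poch_succ (a : R) (n : ℕ) : poch a (n + 1) = poch a n * (a + n) := by
  rw [poch, prod_range_succ, ← poch]

theorem poch_ne_zero_of_le {a : R} {k n : ℕ} (hkn : k ≤ n) (h : poch a n ≠ 0) :
    poch a k ≠ 0 := by
  obtain ⟨j, rfl⟩ := Nat.exists_eq_add_of_le hkn
  exact left_ne_zero_of_mul (poch_add a k j ▸ h)

theorem poch_neg (a : R) (n : ℕ) : poch (-a) n = (-1) ^ n * poch (a - n + 1) n := by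
  rw [poch_eq_eval_ascPochhammer, ascPochhammer_eval_neg_eq_descPochhammer,
    descPochhammer_eval_eq_ascPochhammer, ← poch_eq_eval_ascPochhammer]

theorem prod_range_sub_eq_poch (a : R) (n : ℕ) :
    ∏ i ∈ range n, (a - i) = poch (a - n + 1) n := by
  rw [← descPochhammer_eval_eq_prod_range, descPochhammer_eval_eq_ascPochhammer,
    poch_eq_eval_ascPochhammer]

theorem poch_neg_natCast (j k : ℕ) : poch (-(j : R)) k = (-1) ^ k * j.descFactorial k := by
  rw [poch_eq_eval_ascPochhammer, ascPochhammer_eval_neg_eq_descPochhammer,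
    descPochhammer_eval_eq_descFactorial]

theorem poch_neg_natCast_eq_zero {j k : ℕ} (h : j < k) : poch (-(j : R)) k = 0 := by
  rw [poch_neg_natCast, Nat.descFactorial_eq_zero_iff_lt.mpr h, Nat.cast_zero, mul_zero]

theorem poch_neg_natCast_eq_choose (j k : ℕ) :
    poch (-(j : R)) k = (-1) ^ k * k.factorial * j.choose k := by
  rw [poch_neg_natCast, Nat.descFactorial_eq_factorial_mul_choose, Nat.cast_mul, mul_assoc]

theorem poch_neg_natCast_ne_zero [IsDomain R] [CharZero R] {j k : ℕ} (h : k ≤ j) :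
    poch (-(j : R)) k ≠ 0 := by
  rw [poch_neg_natCast]
  exact mul_ne_zero (pow_ne_zero _ (neg_ne_zero.mpr one_ne_zero))
    (Nat.cast_ne_zero.mpr (Nat.descFactorial_eq_zero_iff_lt.not.mpr (not_lt.mpr h)))

theorem poch_add_one_mul (a : R) (n : ℕ) : poch (a + 1) n * a = poch a n * (a + n) := by
  rw [← poch_succ, poch, poch, prod_range_succ']
  simp only [Nat.cast_add, Nat.cast_one, Nat.cast_zero, add_zero, add_right_comm a, add_assoc]

end Poch

section FiniteDifferences

variable {R : Type*} [CommRing R]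

theorem sum_range_alternating_choose_mul_eval {F : R[X]} {n : ℕ} (hF : F.natDegree ≤ n) :
    ∑ k ∈ range (n + 1), (-1) ^ k * n.choose k * F.eval (k : R) =
      (-1) ^ n * n.factorial * F.coeff n := by
  have hΔ : (fwdDiff 1)^[n] F.eval 0 = n.factorial * F.coeff n := by
    rcases hF.lt_or_eq with hlt | rfl
    · rw [fwdDiff_iter_eq_zero_of_degree_lt hlt, coeff_eq_zero_of_natDegree_lt hlt]
      simp
    · rw [fwdDiff_iter_degree_eq_factorial, Pi.smul_apply, smul_eq_mul, mul_comm]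
      rfl
  rw [fwdDiff_iter_eq_sum_shift] at hΔ
  rw [mul_assoc, ← hΔ, mul_sum]
  refine sum_congr rfl fun k hk => ?_
  obtain ⟨j, rfl⟩ := Nat.exists_eq_add_of_le (Nat.lt_succ_iff.mp (mem_range.mp hk))
  rw [zsmul_eq_mul, zero_add, nsmul_one, Nat.add_sub_cancel_left]
  push_cast
  have hsq : (-1 : R) ^ j * (-1) ^ j = 1 := by rw [← pow_add]; exact Even.neg_one_pow ⟨j, rfl⟩
  linear_combination -((-1 : R) ^ k * (k + j).choose k * F.eval (k : R)) * hsq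

theorem sum_range_alternating_choose_mul_eval_div {K : Type*} [Field K] {P : K[X]} {n : ℕ}
    (hP : P.natDegree ≤ n) {x : K} (hx : ∀ k ≤ n, x - k ≠ 0) :
    ∑ k ∈ range (n + 1), (-1) ^ k * n.choose k * (P.eval (k : K) / (x - k)) =
      (-1) ^ n * n.factorial * P.eval x / ∏ i ∈ range (n + 1), (x - i) := by
  set W := descPochhammer K (n + 1)
  have hWx : W.eval x = ∏ i ∈ range (n + 1), (x - i) := descPochhammer_eval_eq_prod_range _ _
  have hWx0 : W.eval x ≠ 0 :=
    hWx ▸ prod_ne_zero_iff.mpr fun i hi => hx i (Nat.lt_succ_iff.mp (mem_range.mp hi))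
  have hWdeg : W.natDegree = n + 1 := descPochhammer_natDegree K (n + 1)
  set N := C (P.eval x / W.eval x) * W - P
  have hNdeg : N.natDegree ≤ n + 1 :=
    (natDegree_sub_le _ _).trans
      (max_le ((natDegree_C_mul_le _ _).trans hWdeg.le) (hP.trans n.le_succ))
  have hNx : N.IsRoot x := by simp [N, hWx0]
  -- `F` interpolates `P k / (x - k)` at the nodes `k = 0, …, n`, where `W` vanishes.
  set F := N /ₘ (X - C x)
  have hNF : (X - C x) * F = N := mul_divByMonic_eq_iff_isRoot.mpr hNx
  have hFdeg : F.natDegree ≤ n := by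
    rw [natDegree_divByMonic _ (monic_X_sub_C x), natDegree_X_sub_C]
    omega
  have hFeval : ∀ k ≤ n, F.eval (k : K) = P.eval (k : K) / (x - k) := by
    intro k hk
    have hWk : W.eval (k : K) = 0 := descPochhammer_eval_coe_nat_of_lt (Nat.lt_succ_of_le hk)
    have := congrArg (eval (k : K)) hNF
    simp only [N, eval_mul, eval_sub, eval_X, eval_C, hWk, mul_zero, zero_sub] at this
    rw [eq_div_iff (hx k hk)]
    linear_combination -this
  have hFcoeff : F.coeff n = P.eval x / W.eval x := by
    have := congrArg (coeff · (n + 1)) hNF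
    simp only [N, mul_comm (X - C x), coeff_mul_X_sub_C, coeff_sub, coeff_C_mul,
      coeff_eq_zero_of_natDegree_lt (Nat.lt_succ_of_le hFdeg),
      coeff_eq_zero_of_natDegree_lt (Nat.lt_succ_of_le hP)] at this
    rw [← hWdeg, (monic_descPochhammer K (n + 1)).coeff_natDegree] at this
    simpa using this
  calc ∑ k ∈ range (n + 1), (-1) ^ k * n.choose k * (P.eval (k : K) / (x - k))
      = ∑ k ∈ range (n + 1), (-1) ^ k * n.choose k * F.eval (k : K) :=
        sum_congr rfl fun k hk => by rw [hFeval k (Nat.lt_succ_iff.mp (mem_range.mp hk))]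
    _ = (-1) ^ n * n.factorial * F.coeff n := sum_range_alternating_choose_mul_eval hFdeg
    _ = (-1) ^ n * n.factorial * P.eval x / ∏ i ∈ range (n + 1), (x - i) := by
        rw [hFcoeff, hWx, mul_div_assoc]

end FiniteDifferences

section PairingSum

variable {K : Type*} [Field K] [CharZero K]

def jacGPairingTerm (a c : K) (n m k : ℕ) : K :=
  poch (-(n : K)) k * poch ((n : K) - a - c - 1) k / (poch (-a) k * (k.factorial : K)) *
    (poch (-a) (k + m) / poch (-a - c) (k + m))

theorem jacGPairingTerm_eq {a c : K} {n m k : ℕ} (hm : m ≤ n) (hk : k ≤ n)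
    (ha : poch (-a) n ≠ 0) (hb : poch (-a - c) (2 * n) ≠ 0)
    (hx : ∀ j ≤ n, a + c + 1 - n - j ≠ 0) :
    jacGPairingTerm a c n m k = (a + c + 1 - n) / poch (-a - c) n *
      ((-1) ^ k * n.choose k *
        (poch (k - a) m * poch (k + (m - a - c)) (n - m) / (a + c + 1 - n - k))) := by
  have hfirst : poch (-(n : K)) k = (-1) ^ k * k.factorial * n.choose k :=
    poch_neg_natCast_eq_choose n k
  have hnum : poch (-a) (k + m) = poch (-a) k * poch (k - a) m := by
    rw [poch_add, neg_add_eq_sub]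
  have hden :
      poch (-a - c) (n + k) = poch (-a - c) (k + m) * poch (k + (m - a - c)) (n - m) := by
    rw [show n + k = (k + m) + (n - m) by omega, poch_add]
    congr 2
    push_cast
    ring
  have hshift : poch (-a - c) (n + k) * (n - a - c - 1) =
      poch (-a - c) n * (poch ((n : K) - a - c - 1) k * (n - a - c - 1 + k)) := by
    rw [poch_add, mul_assoc, ← poch_add_one_mul]
    congr 3
    ring
  have hak : poch (-a) k ≠ 0 := poch_ne_zero_of_le hk ha
  have hbn : poch (-a - c) n ≠ 0 := poch_ne_zero_of_le (by omega) hb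
  have hbkm : poch (-a - c) (k + m) ≠ 0 := poch_ne_zero_of_le (by omega) hb
  have hxk := hx k hk
  have hx0 : a + c + 1 - n ≠ 0 := by simpa using hx 0 (Nat.zero_le n)
  rw [jacGPairingTerm, hfirst, hnum]
  rw [hden] at hshift
  have hfact : (k.factorial : K) ≠ 0 := Nat.cast_ne_zero.mpr k.factorial_ne_zero
  field_simp
  linear_combination (n.choose k : K) * poch (k - a) m * hshift

theorem sum_jacGPairingTerm {a c : K} {n m : ℕ} (hm : m ≤ n)
    (ha : poch (-a) n ≠ 0) (hb : poch (-a - c) (2 * n) ≠ 0)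
    (hx : ∀ k ≤ n, a + c + 1 - n - k ≠ 0) :
    ∑ k ∈ range (n + 1), jacGPairingTerm a c n m k = (a + c + 1 - n) / poch (-a - c) n *
      ((-1) ^ n * n.factorial * (poch (c + 1 - n) m * poch (1 + m - n : K) (n - m)) /
        ∏ i ∈ range (n + 1), (a + c + 1 - n - i)) := by
  set P : K[X] :=
    (ascPochhammer K m).comp (X - C a) * (ascPochhammer K (n - m)).comp (X + C (m - a - c))
  have hPeval : ∀ y, P.eval y = poch (y - a) m * poch (y + (m - a - c)) (n - m) := by
    simp [P, eval_comp, poch_eq_eval_ascPochhammer]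
  have hPdeg : P.natDegree ≤ n := by
    refine natDegree_mul_le.trans ?_
    simp only [natDegree_comp, ascPochhammer_natDegree, natDegree_X_sub_C, natDegree_X_add_C]
    omega
  rw [sum_congr rfl fun k hk =>
    jacGPairingTerm_eq hm (Nat.lt_succ_iff.mp (mem_range.mp hk)) ha hb hx, ← mul_sum]
  simp_rw [← hPeval]
  rw [sum_range_alternating_choose_mul_eval_div hPdeg hx, hPeval]
  congr 5 <;> ring

theorem sum_jacGPairingTerm_of_lt {a c : K} {n m : ℕ} (hmn : m < n)
    (ha : poch (-a) n ≠ 0) (hb : poch (-a - c) (2 * n) ≠ 0)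
    (hx : ∀ k ≤ n, a + c + 1 - n - k ≠ 0) :
    ∑ k ∈ range (n + 1), jacGPairingTerm a c n m k = 0 := by
  have hvanish : poch (1 + m - n : K) (n - m) = 0 := by
    rw [show (1 + m - n : K) = -((n - m - 1 : ℕ) : K) by
      rw [Nat.cast_sub (by omega), Nat.cast_sub hmn.le]; ring]
    exact poch_neg_natCast_eq_zero (by omega)
  rw [sum_jacGPairingTerm hmn.le ha hb hx, hvanish]
  simp

theorem sum_jacGPairingTerm_self {a c : K} {n : ℕ}
    (ha : poch (-a) n ≠ 0) (hb : poch (-a - c) (2 * n) ≠ 0)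
    (hx : ∀ k ≤ n, a + c + 1 - n - k ≠ 0) :
    ∑ k ∈ range (n + 1), jacGPairingTerm a c n n k =
      (-1) ^ n * n.factorial * poch (-c) n / poch (-a - c) (2 * n) := by
  set q := poch (a + c + 1 - 2 * n) n
  have hsplit : poch (-a - c) (2 * n) = poch (-a - c) n * ((-1) ^ n * q) := by
    rw [two_mul, poch_add, show -a - c + n = -(a + c - n) by ring, poch_neg]
    congr 4
    ring
  have hprod : ∏ i ∈ range (n + 1), (a + c + 1 - n - i) = q * (a + c + 1 - n) := by
    rw [prod_range_sub_eq_poch, poch_succ]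
    congr 2 <;> push_cast <;> ring
  have hbn : poch (-a - c) n ≠ 0 := left_ne_zero_of_mul (hsplit ▸ hb)
  have hq : q ≠ 0 := right_ne_zero_of_mul (right_ne_zero_of_mul (hsplit ▸ hb))
  have hx0 : a + c + 1 - n ≠ 0 := by simpa using hx 0 (Nat.zero_le n)
  rw [sum_jacGPairingTerm le_rfl ha hb hx, hprod, hsplit, poch_neg c, sub_add_eq_add_sub,
    Nat.sub_self, poch_zero, mul_one]
  field_simp

end PairingSum

theorem map_jacGpoly_mul_pow {l1 l2 n m : ℕ} (L : ℚ[X] →ₗ[ℚ] ℚ)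
    (hL : ∀ j : ℕ, j ≤ l1 + l2 →
      L (((1 - X) * C (1 / 2)) ^ j) = poch (-(l1 : ℚ)) j / poch (-(l1 : ℚ) - (l2 : ℚ)) j)
    (hnm : n + m ≤ l1 + l2) :
    L (jacGpoly l1 l2 n * ((1 - X) * C (1 / 2)) ^ m) =
      ∑ k ∈ range (n + 1), jacGPairingTerm (l1 : ℚ) l2 n m k := by
  rw [jacGpoly, sum_mul, map_sum]
  refine sum_congr rfl fun k hk => ?_
  rw [mul_assoc, ← pow_add, ← smul_eq_C_mul, map_smul, smul_eq_mul,
    hL (k + m) (by have := mem_range.mp hk; omega), jacGPairingTerm]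

theorem functional_jacG_general (l1 l2 : ℕ)
    (L : Polynomial ℚ →ₗ[ℚ] ℚ)
    (hL : ∀ m : ℕ, m ≤ l1 + l2 →
      L (((1 - X) * C (1 / 2)) ^ m) =
        poch (-(l1 : ℚ)) m / poch (-(l1 : ℚ) - (l2 : ℚ)) m)
    (n : ℕ) (hn : n ≤ min l1 l2) :
    (∀ m : ℕ, m < n → L (jacGpoly l1 l2 n * ((1 - X) * C (1 / 2)) ^ m) = 0) ∧
    L (jacGpoly l1 l2 n * ((1 - X) * C (1 / 2)) ^ n) =
      (-1) ^ n * (n.factorial : ℚ) * poch (-(l2 : ℚ)) n /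
        poch (-(l1 : ℚ) - (l2 : ℚ)) (2 * n) := by
  obtain ⟨hn1, hn2⟩ := le_min_iff.mp hn
  have ha : poch (-(l1 : ℚ)) n ≠ 0 := poch_neg_natCast_ne_zero hn1
  have hb : poch (-(l1 : ℚ) - l2) (2 * n) ≠ 0 := by
    rw [← neg_add', ← Nat.cast_add]
    exact poch_neg_natCast_ne_zero (by omega)
  have hx : ∀ k ≤ n, (l1 : ℚ) + l2 + 1 - n - k ≠ 0 := by
    intro k hk
    have : (k : ℚ) + n ≤ l1 + l2 := by exact_mod_cast (by omega : k + n ≤ l1 + l2)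
    exact ne_of_gt (by linarith)
  refine ⟨fun m hm => ?_, ?_⟩
  · rw [map_jacGpoly_mul_pow L hL (by omega)]
    exact sum_jacGPairingTerm_of_lt hm ha hb hx
  · rw [map_jacGpoly_mul_pow L hL (by omega)]
    exact sum_jacGPairingTerm_self ha hb hx

theorem functional_jacG (l1 l2 : ℕ) (h1 : 0 < l1) (h2 : 0 < l2)
    (L : Polynomial ℚ →ₗ[ℚ] ℚ)
    (hL : ∀ m : ℕ, m ≤ l1 + l2 →
      L (((1 - X) * C (1 / 2)) ^ m) =
        poch (-(l1 : ℚ)) m / poch (-(l1 : ℚ) - (l2 : ℚ)) m)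
    (n : ℕ) (hn : n ≤ min l1 l2) :
    (∀ m : ℕ, m < n → L (jacGpoly l1 l2 n * ((1 - X) * C (1 / 2)) ^ m) = 0) ∧
    L (jacGpoly l1 l2 n * ((1 - X) * C (1 / 2)) ^ n) =
      (-1) ^ n * (n.factorial : ℚ) * poch (-(l2 : ℚ)) n /
        poch (-(l1 : ℚ) - (l2 : ℚ)) (2 * n) :=
  functional_jacG_general l1 l2 L hL n hn
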